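/- Generation lemma for abstractions: for any context Γ, term t, and type T, if Γ ⊢ λx.t : T is derivable in Add, then there exist a unit type U and a type R such that Γ, x:U ⊢ t : R is derivable in Add and U→R ≼ T. -/

import Mathlib

set_option maxHeartbeats 1000000

/-! ## Terms of the non-deterministic call-by-value λ-calculus (de Bruijn indices) -/

inductive Tm : Type
  | var : ℕ → Tm
  | lam : Tm → Tm
  | app : Tm → Tm → Tm
  | add : Tm → Tm → Tm
  | zero : Tm
  deriving DecidableEq

namespace Tm

/-- Values: variables and abstractions. -/
inductive IsValue : Tm → Prop
  | var (n : ℕ) : IsValue (var n)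
  | lam (t : Tm) : IsValue (lam t)

/-- de Bruijn shifting: add `d` to every variable index `≥ c`. -/
def shift (d c : ℕ) : Tm → Tm
  | var n => if n < c then var n else var (n + d)
  | lam t => lam (shift d (c + 1) t)
  | app t u => app (shift d c t) (shift d c u)
  | add t u => add (shift d c t) (shift d c u)
  | zero => zero

/-- Capture-avoiding substitution of the variable `k` by `v` (removing the binder). -/
def subst (k : ℕ) (v : Tm) : Tm → Tm
  | var n => if n = k then shift k 0 v else if k < n then var (n - 1) else var n
  | lam t => lam (subst (k + 1) v t)
  | app t u => app (subst k v t) (subst k v u)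
  | add t u => add (subst k v t) (subst k v u)
  | zero => zero

/-- `ClosedUnder k t`: every free variable of `t` has index `< k`. -/
def ClosedUnder (k : ℕ) : Tm → Prop
  | var n => n < k
  | lam t => ClosedUnder (k + 1) t
  | app t u => ClosedUnder k t ∧ ClosedUnder k u
  | add t u => ClosedUnder k t ∧ ClosedUnder k u
  | zero => True

/-- Closed terms. -/
def Closed (t : Tm) : Prop := ClosedUnder 0 t

end Tm

open Tm

/-- The AC-equivalence on terms: the least congruence making `+`
associative and commutative (terms are considered modulo `Aeq`). -/
inductive Aeq : Tm → Tm → Prop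
  | refl (t : Tm) : Aeq t t
  | symm : Aeq t u → Aeq u t
  | trans : Aeq t u → Aeq u s → Aeq t s
  | comm (t u : Tm) : Aeq (.add t u) (.add u t)
  | assoc (t u s : Tm) : Aeq (.add t (.add u s)) (.add (.add t u) s)
  | lamCongr : Aeq t t' → Aeq (.lam t) (.lam t')
  | appCongr : Aeq t t' → Aeq u u' → Aeq (.app t u) (.app t' u')
  | addCongr : Aeq t t' → Aeq u u' → Aeq (.add t u) (.add t' u')

/-- One-step reduction (the five rewrite rules plus β, closed under all
contexts, and performed modulo the AC-equivalence of terms). -/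
inductive Step : Tm → Tm → Prop
  | distrRight (t u s : Tm) : Step (.app (.add t u) s) (.add (.app t s) (.app u s))
  | distrLeft (t u s : Tm) : Step (.app t (.add u s)) (.add (.app t u) (.app t s))
  | zeroApp (t : Tm) : Step (.app .zero t) .zero
  | appZero (t : Tm) : Step (.app t .zero) .zero
  | addZero (t : Tm) : Step (.add t .zero) t
  | beta (t v : Tm) : IsValue v → Step (.app (.lam t) v) (Tm.subst 0 v t)
  | appLeft : Step t t' → Step (.app t u) (.app t' u)
  | appRight : Step u u' → Step (.app t u) (.app t u')
  | addLeft : Step t t' → Step (.add t u) (.add t' u)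
  | addRight : Step u u' → Step (.add t u) (.add t u')
  | lamCongr : Step t t' → Step (.lam t) (.lam t')
  | ac : Aeq t t' → Step t' u' → Aeq u' u → Step t u

/-- Strong normalisation of a term: accessibility of the inverse reduction. -/
def SN (t : Tm) : Prop := Acc (fun a b => Step b a) t

/-- The set of strongly normalising closed terms. -/
def SNset : Set Tm := {t | Closed t ∧ SN t}

/-- Pseudo-values: abstractions and sums of pseudo-values. -/
inductive PseudoValue : Tm → Prop
  | lam (t : Tm) : PseudoValue (.lam t)
  | add : PseudoValue t → PseudoValue u → PseudoValue (.add t u)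

/-- Neutral terms: closed terms that are not pseudo-values. -/
def Neutral (t : Tm) : Prop := Closed t ∧ ¬ PseudoValue t

/-- The set of one-step reducts of `t`. -/
def Red (t : Tm) : Set Tm := {u | Step t u}

/-- The set of reducts (in any number of steps, including zero) of terms of `S`. -/
def RedStar (S : Set Tm) : Set Tm := {u | ∃ t ∈ S, Relation.ReflTransGen Step t u}

/-- The closure of a set of terms under (CR3). -/
inductive Clo (S : Set Tm) : Tm → Prop
  | base {t : Tm} : t ∈ S → Clo S t
  | step {t : Tm} : Neutral t → (∀ u, Step t u → Clo S u) → Clo S t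

/-- `clo S`: the least set containing `S` and closed under (CR3). -/
def clo (S : Set Tm) : Set Tm := {t | Clo S t}

/-- Reducibility candidates. -/
structure IsCandidate (A : Set Tm) : Prop where
  cr1 : A ⊆ SNset
  cr2 : ∀ t ∈ A, Red t ⊆ A
  cr3 : ∀ t, Neutral t → Red t ⊆ A → t ∈ A

/-- The arrow operator on sets of closed terms. -/
def CArrow (A B : Set Tm) : Set Tm := {t | Closed t ∧ ∀ u ∈ A, Tm.app t u ∈ B}

/-- The sum of two sets of (AC-classes of) terms. -/
def CSum (A B : Set Tm) : Set Tm := {s | ∃ t ∈ A, ∃ u ∈ B, Aeq s (Tm.add t u)}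

/-- The ⊞ operator on reducibility candidates. -/
def CPlus (A B : Set Tm) : Set Tm := clo (CSum A B ∪ A ∪ B)

/-! ## Types of the Add type system -/

mutual
  /-- Unit types. -/
  inductive UTy : Type
    | var : ℕ → UTy
    | arrow : UTy → Ty → UTy
    | all : UTy → UTy

  /-- Types. -/
  inductive Ty : Type
    | unit : UTy → Ty
    | add : Ty → Ty → Ty
    | zero : Ty
end

mutual
  /-- Shifting of type variables in unit types. -/
  def UTy.shift (d c : ℕ) : UTy → UTy
    | .var n => if n < c then .var n else .var (n + d)
    | .arrow U T => .arrow (UTy.shift d c U) (Ty.shift d c T)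
    | .all U => .all (UTy.shift d (c + 1) U)

  /-- Shifting of type variables in types. -/
  def Ty.shift (d c : ℕ) : Ty → Ty
    | .unit U => .unit (UTy.shift d c U)
    | .add T R => .add (Ty.shift d c T) (Ty.shift d c R)
    | .zero => .zero
end

mutual
  /-- Substitution of the (bound) type variable `k` by `V` in a unit type. -/
  def UTy.subst (k : ℕ) (V : UTy) : UTy → UTy
    | .var n => if n = k then UTy.shift k 0 V else if k < n then .var (n - 1) else .var n
    | .arrow U T => .arrow (UTy.subst k V U) (Ty.subst k V T)
    | .all U => .all (UTy.subst (k + 1) V U)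

  /-- Substitution of the (bound) type variable `k` by `V` in a type. -/
  def Ty.subst (k : ℕ) (V : UTy) : Ty → Ty
    | .unit U => .unit (UTy.subst k V U)
    | .add T R => .add (Ty.subst k V T) (Ty.subst k V R)
    | .zero => .zero
end

/-- Iterated substitution `U[V⃗/X⃗]` for a unit type under `|Vs|` quantifiers. -/
def UTy.msubst (Vs : List UTy) (U : UTy) : UTy := Vs.foldl (fun A V => UTy.subst 0 V A) U

/-- Iterated substitution `T[V⃗/X⃗]` for a type under `|Vs|` quantifiers. -/
def Ty.msubst (Vs : List UTy) (T : Ty) : Ty := Vs.foldl (fun A V => Ty.subst 0 V A) T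

mutual
  /-- Substitution of the free type variable `X` (seen at depth `c`) by `V` in a unit type. -/
  def UTy.replAux (X : ℕ) (V : UTy) (c : ℕ) : UTy → UTy
    | .var n => if n = X + c then UTy.shift c 0 V else .var n
    | .arrow U T => .arrow (UTy.replAux X V c U) (Ty.replAux X V c T)
    | .all U => .all (UTy.replAux X V (c + 1) U)

  /-- Substitution of the free type variable `X` (seen at depth `c`) by `V` in a type. -/
  def Ty.replAux (X : ℕ) (V : UTy) (c : ℕ) : Ty → Ty
    | .unit U => .unit (UTy.replAux X V c U)
    | .add T R => .add (Ty.replAux X V c T) (Ty.replAux X V c R)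
    | .zero => .zero
end

/-- Capture-avoiding substitution `U[V/X]` of a free type variable. -/
def UTy.repl (X : ℕ) (V : UTy) (U : UTy) : UTy := UTy.replAux X V 0 U

/-- Capture-avoiding substitution `T[V/X]` of a free type variable. -/
def Ty.repl (X : ℕ) (V : UTy) (T : Ty) : Ty := Ty.replAux X V 0 T

mutual
  /-- Abstraction of the free type variable `X` (at depth `c`), used to form `∀X.U`. -/
  def UTy.absAux (X c : ℕ) : UTy → UTy
    | .var n => if n = X + c then .var c else if c ≤ n then .var (n + 1) else .var n
    | .arrow U T => .arrow (UTy.absAux X c U) (Ty.absAux X c T)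
    | .all U => .all (UTy.absAux X (c + 1) U)

  /-- Abstraction of the free type variable `X` (at depth `c`) in a type. -/
  def Ty.absAux (X c : ℕ) : Ty → Ty
    | .unit U => .unit (UTy.absAux X c U)
    | .add T R => .add (Ty.absAux X c T) (Ty.absAux X c R)
    | .zero => .zero
end

/-- `∀X.U`: universal quantification of the free type variable `X` in `U`. -/
def UTy.genAll (X : ℕ) (U : UTy) : UTy := .all (UTy.absAux X 0 U)

mutual
  /-- `X` occurs free in a unit type. -/
  def UTy.Free (n : ℕ) : UTy → Prop
    | .var m => m = n
    | .arrow U T => UTy.Free n U ∨ Ty.Free n T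
    | .all U => UTy.Free (n + 1) U

  /-- `X` occurs free in a type. -/
  def Ty.Free (n : ℕ) : Ty → Prop
    | .unit U => UTy.Free n U
    | .add T R => Ty.Free n T ∨ Ty.Free n R
    | .zero => False
end

mutual
  /-- Equivalence of unit types (the least congruence making `+` on types
  associative, commutative, with neutral element `𝟘`). -/
  inductive UEq : UTy → UTy → Prop
    | refl (U : UTy) : UEq U U
    | symm : UEq U V → UEq V U
    | trans : UEq U V → UEq V W → UEq U W
    | arrow : UEq U U' → TEq T T' → UEq (.arrow U T) (.arrow U' T')
    | all : UEq U U' → UEq (.all U) (.all U')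

  /-- Equivalence of types: the least congruence such that
  `T+R ≡ R+T`, `T+(R+S) ≡ (T+R)+S` and `T+𝟘 ≡ T`. -/
  inductive TEq : Ty → Ty → Prop
    | refl (T : Ty) : TEq T T
    | symm : TEq T R → TEq R T
    | trans : TEq T R → TEq R S → TEq T S
    | unit : UEq U U' → TEq (.unit U) (.unit U')
    | addCongr : TEq T T' → TEq R R' → TEq (.add T R) (.add T' R')
    | comm (T R : Ty) : TEq (.add T R) (.add R T)
    | assoc (T R S : Ty) : TEq (.add T (.add R S)) (.add (.add T R) S)
    | zero (T : Ty) : TEq (.add T .zero) T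
end

/-- `Σ_{i} T_i`, with the empty sum being `𝟘`. -/
def sumT (Ts : List Ty) : Ty := Ts.foldl Ty.add Ty.zero

/-- `∀X₁.…∀X_k.U`. -/
def allN : ℕ → UTy → UTy
  | 0, U => U
  | k + 1, U => .all (allN k U)

/-- Lifting of type variables in a typing context (for ∀-introduction). -/
def liftCtx (Γ : List UTy) : List UTy := Γ.map (UTy.shift 1 0)

/-! ## The Add type system -/

/-- Typing judgements of the Add type system. -/
inductive Typing : List UTy → Tm → Ty → Prop
  | ax {Γ : List UTy} {n : ℕ} {U : UTy} : Γ[n]? = some U → Typing Γ (.var n) (.unit U)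
  | axZero {Γ : List UTy} : Typing Γ .zero .zero
  | equiv {Γ t T R} : Typing Γ t T → TEq T R → Typing Γ t R
  | arrI {Γ U t T} : Typing (U :: Γ) t T → Typing Γ (.lam t) (.unit (.arrow U T))
  | arrE {Γ t u} {k : ℕ} {U : UTy} {Ts : List Ty} {Vs : List (List UTy)} :
      Ts ≠ [] → Vs ≠ [] → (∀ V ∈ Vs, V.length = k) →
      Typing Γ t (sumT (Ts.map fun Ti => .unit (allN k (.arrow U Ti)))) →
      Typing Γ u (sumT (Vs.map fun Vj => .unit (UTy.msubst Vj U))) →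
      Typing Γ (.app t u)
        (sumT ((Ts.map fun Ti => Vs.map fun Vj => Ty.msubst Vj Ti).flatten))
  | addI {Γ t u T R} : Typing Γ t T → Typing Γ u R → Typing Γ (.add t u) (.add T R)
  | allE {Γ t U} (V : UTy) : Typing Γ t (.unit (.all U)) → Typing Γ t (.unit (UTy.subst 0 V U))
  | allI {Γ t U} : Typing (liftCtx Γ) t (.unit U) → Typing Γ t (.unit (.all U))

/-! ## Interpretation of types by reducibility candidates -/

/-- Extension of a valuation. -/
def consV (A : Set Tm) (ρ : ℕ → Set Tm) : ℕ → Set Tm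
  | 0 => A
  | n + 1 => ρ n

mutual
  /-- Interpretation of unit types. -/
  def interpU : UTy → (ℕ → Set Tm) → Set Tm
    | .var n, ρ => ρ n
    | .arrow U T, ρ => CArrow (interpU U ρ) (interpT T ρ)
    | .all U, ρ => {t | ∀ A : Set Tm, IsCandidate A → t ∈ interpU U (consV A ρ)}

  /-- Interpretation of types. -/
  def interpT : Ty → (ℕ → Set Tm) → Set Tm
    | .unit U, ρ => interpU U ρ
    | .add T R, ρ => CPlus (interpT T ρ) (interpT R ρ)
    | .zero, _ => clo ∅
end

/-- Lifting of a simultaneous substitution under a binder. -/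
def liftSub (σ : ℕ → Tm) : ℕ → Tm
  | 0 => .var 0
  | n + 1 => Tm.shift 1 0 (σ n)

/-- Simultaneous substitution `t_σ` of all free term variables of `t`. -/
def Tm.msubst (σ : ℕ → Tm) : Tm → Tm
  | .var n => σ n
  | .lam t => .lam (Tm.msubst (liftSub σ) t)
  | .app t u => .app (Tm.msubst σ t) (Tm.msubst σ u)
  | .add t u => .add (Tm.msubst σ t) (Tm.msubst σ u)
  | .zero => .zero

/-! ## The relations ⋖ and ≼ on types -/

/-- The relation `⋖` on unit types: `U₁ ⋖ U₂` iff either `U₂ ≡ ∀X.U₁`, or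
`U₁ ≡ ∀X.U'` and `U₂ ≡ U'[V/X]`. -/
inductive SSub : UTy → UTy → Prop
  | gen {U₁ U₂ : UTy} (X : ℕ) : UEq U₂ (UTy.genAll X U₁) → SSub U₁ U₂
  | inst {U₁ U₂ : UTy} (U' V : UTy) : UEq U₁ (.all U') → UEq U₂ (UTy.subst 0 V U') →
      SSub U₁ U₂

/-- The relation `≼`: the reflexive (with respect to `≡`) and transitive
closure of `⋖`, on types. -/
inductive TPre : Ty → Ty → Prop
  | ofEq : TEq T T' → TPre T T'
  | ofSSub {U V : UTy} : SSub U V → TPre (.unit U) (.unit V)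
  | trans : TPre T T' → TPre T' T'' → TPre T T''

/-! ## Trees and the structured type system Add_struct -/

/-- Binary trees with two kinds of leaves: `ℓ`-leaves and `𝟘`-leaves. -/
inductive ATree : Type
  | leaf : ATree
  | zleaf : ATree
  | node : ATree → ATree → ATree
  deriving DecidableEq

namespace ATree

/-- ATree composition: branch a copy of `A'` at each `ℓ`-leaf of `A`. -/
def comp : ATree → ATree → ATree
  | .leaf, A' => A'
  | .zleaf, _ => .zleaf
  | .node A B, A' => .node (comp A A') (comp B A')

/-- `LeafAt A w`: the word `w` (over `{l,r}`, here `{false,true}`) is the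
address of an `ℓ`-leaf of `A`. -/
inductive LeafAt : ATree → List Bool → Prop
  | leaf : LeafAt .leaf []
  | left {A B w} : LeafAt A w → LeafAt (.node A B) (false :: w)
  | right {A B w} : LeafAt B w → LeafAt (.node A B) (true :: w)

/-- Labelling of the `ℓ`-leaves of a tree by unit types, yielding a type. -/
def labelU : ATree → (List Bool → UTy) → Ty
  | .leaf, f => .unit (f [])
  | .zleaf, _ => .zero
  | .node A B, f => .add (labelU A fun w => f (false :: w)) (labelU B fun w => f (true :: w))

/-- Labelling of the `ℓ`-leaves of a tree by types, yielding a type. -/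
def labelT : ATree → (List Bool → Ty) → Ty
  | .leaf, f => f []
  | .zleaf, _ => .zero
  | .node A B, f => .add (labelT A fun w => f (false :: w)) (labelT B fun w => f (true :: w))

/-- Split an address of a leaf of `A ∘ A'` into the `A`-part and the `A'`-part. -/
def split : ATree → List Bool → List Bool × List Bool
  | .leaf, p => ([], p)
  | .zleaf, p => ([], p)
  | .node A _, false :: p => ((split A p).1.cons false, (split A p).2)
  | .node _ B, true :: p => ((split B p).1.cons true, (split B p).2)
  | .node _ _, [] => ([], [])

end ATree

/-- Typing derivations of the structured type system Add_struct. -/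
inductive SDeriv : List UTy → Tm → Ty → Type
  | ax (Γ : List UTy) (n : ℕ) (U : UTy) (h : Γ[n]? = some U) : SDeriv Γ (.var n) (.unit U)
  | axZero (Γ : List UTy) : SDeriv Γ .zero .zero
  | arrI {Γ U t T} (D : SDeriv (U :: Γ) t T) : SDeriv Γ (.lam t) (.unit (.arrow U T))
  | addI {Γ t u T R} (D₁ : SDeriv Γ t T) (D₂ : SDeriv Γ u R) :
      SDeriv Γ (.add t u) (.add T R)
  | allE {Γ t U} (V : UTy) (D : SDeriv Γ t (.unit (.all U))) :
      SDeriv Γ t (.unit (UTy.subst 0 V U))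
  | allI {Γ t U} (D : SDeriv (liftCtx Γ) t (.unit U)) : SDeriv Γ t (.unit (.all U))
  | arrE {Γ t u} (A A' : ATree) (k : ℕ) (U : UTy) (Tf : List Bool → Ty)
      (Vf : List Bool → List UTy)
      (hlen : ∀ v, A'.LeafAt v → (Vf v).length = k)
      (D₁ : SDeriv Γ t (A.labelU fun w => allN k (.arrow U (Tf w))))
      (D₂ : SDeriv Γ u (A'.labelU fun v => UTy.msubst (Vf v) U)) :
      SDeriv Γ (.app t u)
        ((A.comp A').labelT fun p => Ty.msubst (Vf (A.split p).2) (Tf (A.split p).1))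

/-! ## System F with pairs -/

/-- Terms of System F with pairs. -/
inductive FTm : Type
  | var : ℕ → FTm
  | lam : FTm → FTm
  | app : FTm → FTm → FTm
  | star : FTm
  | pair : FTm → FTm → FTm
  | pl : FTm → FTm
  | pr : FTm → FTm
  deriving DecidableEq

/-- Types of System F with pairs. -/
inductive FTy : Type
  | var : ℕ → FTy
  | arrow : FTy → FTy → FTy
  | all : FTy → FTy
  | one : FTy
  | prod : FTy → FTy → FTy
  deriving DecidableEq

/-- Shifting of term variables in F-terms. -/
def FTm.shift (d c : ℕ) : FTm → FTm
  | .var n => if n < c then .var n else .var (n + d)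
  | .lam t => .lam (FTm.shift d (c + 1) t)
  | .app t u => .app (FTm.shift d c t) (FTm.shift d c u)
  | .star => .star
  | .pair t u => .pair (FTm.shift d c t) (FTm.shift d c u)
  | .pl t => .pl (FTm.shift d c t)
  | .pr t => .pr (FTm.shift d c t)

/-- Substitution of the term variable `k` by `v` in an F-term. -/
def FTm.subst (k : ℕ) (v : FTm) : FTm → FTm
  | .var n => if n = k then FTm.shift k 0 v else if k < n then .var (n - 1) else .var n
  | .lam t => .lam (FTm.subst (k + 1) v t)
  | .app t u => .app (FTm.subst k v t) (FTm.subst k v u)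
  | .star => .star
  | .pair t u => .pair (FTm.subst k v t) (FTm.subst k v u)
  | .pl t => .pl (FTm.subst k v t)
  | .pr t => .pr (FTm.subst k v t)

/-- Shifting of type variables in F-types. -/
def FTy.shift (d c : ℕ) : FTy → FTy
  | .var n => if n < c then .var n else .var (n + d)
  | .arrow A B => .arrow (FTy.shift d c A) (FTy.shift d c B)
  | .all A => .all (FTy.shift d (c + 1) A)
  | .one => .one
  | .prod A B => .prod (FTy.shift d c A) (FTy.shift d c B)

/-- Substitution of the type variable `k` by `B` in an F-type. -/
def FTy.subst (k : ℕ) (B : FTy) : FTy → FTy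
  | .var n => if n = k then FTy.shift k 0 B else if k < n then .var (n - 1) else .var n
  | .arrow A A' => .arrow (FTy.subst k B A) (FTy.subst k B A')
  | .all A => .all (FTy.subst (k + 1) B A)
  | .one => .one
  | .prod A A' => .prod (FTy.subst k B A) (FTy.subst k B A')

/-- One-step reduction in System F with pairs. -/
inductive FStep : FTm → FTm → Prop
  | beta (t u : FTm) : FStep (.app (.lam t) u) (FTm.subst 0 u t)
  | plPair (t u : FTm) : FStep (.pl (.pair t u)) t
  | prPair (t u : FTm) : FStep (.pr (.pair t u)) u
  | eta (t : FTm) : FStep (.lam (.app (FTm.shift 1 0 t) (.var 0))) t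
  | sp (p : FTm) : FStep (.pair (.pl p) (.pr p)) p
  | lamCongr : FStep t t' → FStep (.lam t) (.lam t')
  | appLeft : FStep t t' → FStep (.app t u) (.app t' u)
  | appRight : FStep u u' → FStep (.app t u) (.app t u')
  | pairLeft : FStep t t' → FStep (.pair t u) (.pair t' u)
  | pairRight : FStep u u' → FStep (.pair t u) (.pair t u')
  | plCongr : FStep t t' → FStep (.pl t) (.pl t')
  | prCongr : FStep t t' → FStep (.pr t) (.pr t')

/-- Typing in System F with pairs. -/
inductive FTyping : List FTy → FTm → FTy → Prop
  | ax {Γ n A} : Γ[n]? = some A → FTyping Γ (.var n) A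
  | star {Γ} : FTyping Γ .star .one
  | lam {Γ A t B} : FTyping (A :: Γ) t B → FTyping Γ (.lam t) (.arrow A B)
  | app {Γ t u A B} : FTyping Γ t (.arrow A B) → FTyping Γ u A → FTyping Γ (.app t u) B
  | pair {Γ t u A B} : FTyping Γ t A → FTyping Γ u B → FTyping Γ (.pair t u) (.prod A B)
  | pl {Γ t A B} : FTyping Γ t (.prod A B) → FTyping Γ (.pl t) A
  | pr {Γ t A B} : FTyping Γ t (.prod A B) → FTyping Γ (.pr t) B
  | allI {Γ t A} : FTyping (Γ.map (FTy.shift 1 0)) t A → FTyping Γ t (.all A)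
  | allE {Γ t A} (B : FTy) : FTyping Γ t (.all A) → FTyping Γ t (FTy.subst 0 B A)

/-! ## The translation from Add_struct into System F with pairs -/

mutual
  /-- Translation of unit types into F-types. -/
  def transU : UTy → FTy
    | .var n => .var n
    | .arrow U T => .arrow (transU U) (transT T)
    | .all U => .all (transU U)

  /-- Translation of Add types into F-types. -/
  def transT : Ty → FTy
    | .unit U => transU U
    | .add T R => .prod (transT T) (transT R)
    | .zero => .one
end

/-- Labelling of the `ℓ`-leaves of a tree by F-terms (pairs at the nodes, `⋆`
at the `𝟘`-leaves), yielding an F-term. -/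
def ATree.labelF : ATree → (List Bool → FTm) → FTm
  | .leaf, f => f []
  | .zleaf, _ => .star
  | .node A B, f => .pair (ATree.labelF A fun w => f (false :: w))
      (ATree.labelF B fun w => f (true :: w))

/-- `π_{w̄}(t)`: the composite of projections along the mirror of the word `w`. -/
def projMirror (w : List Bool) (t : FTm) : FTm :=
  w.foldl (fun s b => if b then .pr s else .pl s) t

/-- The translation `|t|_D` of a term typed in Add_struct by a derivation `D`
into an F-term. -/
def transD : ∀ {Γ : List UTy} {t : Tm} {T : Ty}, SDeriv Γ t T → FTm
  | _, _, _, .ax _ n _ _ => .var n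
  | _, _, _, .axZero _ => .star
  | _, _, _, .arrI D => .lam (transD D)
  | _, _, _, .addI D₁ D₂ => .pair (transD D₁) (transD D₂)
  | _, _, _, .allE _ D => transD D
  | _, _, _, .allI D => transD D
  | _, _, _, .arrE A A' _ _ _ _ _ D₁ D₂ =>
      (A.comp A').labelF fun p =>
        .app (projMirror (A.split p).1 (transD D₁)) (projMirror (A.split p).2 (transD D₂))

/-! ## Structural reduction (without AC and without the rule `t+𝟎 → t`) -/

/-- One-step reduction by a rule other than `t+𝟎 → t` (and not using the
AC-equivalence, which is absent from Add_struct). -/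
inductive SStep : Tm → Tm → Prop
  | distrRight (t u s : Tm) : SStep (.app (.add t u) s) (.add (.app t s) (.app u s))
  | distrLeft (t u s : Tm) : SStep (.app t (.add u s)) (.add (.app t u) (.app t s))
  | zeroApp (t : Tm) : SStep (.app .zero t) .zero
  | appZero (t : Tm) : SStep (.app t .zero) .zero
  | beta (t v : Tm) : IsValue v → SStep (.app (.lam t) v) (Tm.subst 0 v t)
  | appLeft : SStep t t' → SStep (.app t u) (.app t' u)
  | appRight : SStep u u' → SStep (.app t u) (.app t u')
  | addLeft : SStep t t' → SStep (.add t u) (.add t' u)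
  | addRight : SStep u u' → SStep (.add t u) (.add t u')
  | lamCongr : SStep t t' → SStep (.lam t) (.lam t')

/-! ## The partial inverse translation -/

/-- Partial inverse translation on types. -/
def invTy : FTy → Option Ty
  | .var n => some (.unit (.var n))
  | .one => some .zero
  | .all A =>
    match invTy A with
    | some (.unit U) => some (.unit (.all U))
    | _ => none
  | .prod A B =>
    match invTy A, invTy B with
    | some T, some R => some (.add T R)
    | _, _ => none
  | .arrow A B =>
    match invTy A, invTy B with
    | some (.unit U), some T => some (.unit (.arrow U T))
    | _, _ => none

/-- An F-term of the shape `A[wv ↦ π_{w̄}(t) π_{v̄}(u)]` for a non-trivial tree. -/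
def IsTreeApp (s : FTm) : Prop :=
  ∃ (A A' : ATree) (t u : FTm), A.comp A' ≠ .leaf ∧ A.comp A' ≠ .zleaf ∧
    s = (A.comp A').labelF fun p =>
      .app (projMirror (A.split p).1 t) (projMirror (A.split p).2 u)

/-- The partial inverse translation on F-terms, as a relation. -/
inductive InvTm : FTm → Tm → Prop
  | var (n : ℕ) : InvTm (.var n) (.var n)
  | star : InvTm .star .zero
  | lam : InvTm t t' → InvTm (.lam t) (.lam t')
  | app : InvTm t t' → InvTm u u' → InvTm (.app t u) (.app t' u')
  | treeApp (A A' : ATree) {t u : FTm} {t' u' : Tm} :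
      A.comp A' ≠ .leaf → A.comp A' ≠ .zleaf → InvTm t t' → InvTm u u' →
      InvTm ((A.comp A').labelF fun p =>
          .app (projMirror (A.split p).1 t) (projMirror (A.split p).2 u))
        (.app t' u')
  | pair : ¬ IsTreeApp (.pair t u) → InvTm t t' → InvTm u u' →
      InvTm (.pair t u) (.add t' u')


/-!
Induction on the derivation of `Γ ⊢ λx.t : T`, which can only end with (→I), (≡), (∀E) or
(∀I). (→I) gives the witnesses, and (≡) and (∀E) extend the `≼`-chain by one `≡`- resp.
`⋖`-step. In the (∀I) case the induction hypothesis lives in the lifted context `Γ↑`, with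
`W → R ≼ U`. Instantiating the bound type variable by a type variable `Y` that is fresh for
everything involved maps `Γ↑` back to `Γ`, preserves typing and `≼` (a fresh `Y` cannot be
captured by the generalisations in `⋖`), and `U[Y/X] ⋖ ∀X.U`.
-/

open Filter

mutual
theorem UTy.shift_zero (c : ℕ) : ∀ A : UTy, UTy.shift 0 c A = A
  | .var n => by simp [UTy.shift]
  | .arrow U T => by simp [UTy.shift, UTy.shift_zero c U, Ty.shift_zero c T]
  | .all U => by simp [UTy.shift, UTy.shift_zero (c + 1) U]

theorem Ty.shift_zero (c : ℕ) : ∀ A : Ty, Ty.shift 0 c A = A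
  | .unit U => by simp [Ty.shift, UTy.shift_zero c U]
  | .add T R => by simp [Ty.shift, Ty.shift_zero c T, Ty.shift_zero c R]
  | .zero => rfl
end

mutual
theorem UTy.shift_shift (j d : ℕ) : ∀ (A : UTy) {c c' : ℕ}, c' ≤ c → c ≤ c' + d →
    UTy.shift j c (UTy.shift d c' A) = UTy.shift (j + d) c' A
  | .var n, c, c', _, _ => by grind [UTy.shift]
  | .arrow U T, _, _, h₁, h₂ => by
      simp [UTy.shift, UTy.shift_shift j d U h₁ h₂, Ty.shift_shift j d T h₁ h₂]
  | .all U, _, _, h₁, h₂ => by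
      simp [UTy.shift, UTy.shift_shift j d U (Nat.succ_le_succ h₁) (by omega)]

theorem Ty.shift_shift (j d : ℕ) : ∀ (A : Ty) {c c' : ℕ}, c' ≤ c → c ≤ c' + d →
    Ty.shift j c (Ty.shift d c' A) = Ty.shift (j + d) c' A
  | .unit U, _, _, h₁, h₂ => by simp [Ty.shift, UTy.shift_shift j d U h₁ h₂]
  | .add T R, _, _, h₁, h₂ => by
      simp [Ty.shift, Ty.shift_shift j d T h₁ h₂, Ty.shift_shift j d R h₁ h₂]
  | .zero, _, _, _, _ => rfl
end

mutual
theorem UTy.subst_shift (V : UTy) (j k : ℕ) : ∀ (A : UTy) (c : ℕ),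
    UTy.subst (j + (k + c)) V (UTy.shift j c A) = UTy.shift j c (UTy.subst (k + c) V A)
  | .var n, c => by
      have := UTy.shift_shift j (k + c) V (Nat.zero_le c) (by omega)
      grind [UTy.shift, UTy.subst]
  | .arrow U T, c => by
      simp [UTy.shift, UTy.subst, UTy.subst_shift V j k U c, Ty.subst_shift V j k T c]
  | .all U, c => by
      simpa only [UTy.shift, UTy.subst, UTy.all.injEq, Nat.add_assoc] using
        UTy.subst_shift V j k U (c + 1)

theorem Ty.subst_shift (V : UTy) (j k : ℕ) : ∀ (A : Ty) (c : ℕ),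
    Ty.subst (j + (k + c)) V (Ty.shift j c A) = Ty.shift j c (Ty.subst (k + c) V A)
  | .unit U, c => by simp [Ty.shift, Ty.subst, UTy.subst_shift V j k U c]
  | .add T R, c => by
      simp [Ty.shift, Ty.subst, Ty.subst_shift V j k T c, Ty.subst_shift V j k R c]
  | .zero, _ => rfl
end

mutual
theorem UTy.subst_shift_succ (V : UTy) (e : ℕ) :
    ∀ (A : UTy) {c j : ℕ}, c ≤ j → j ≤ c + e →
    UTy.subst j V (UTy.shift (e + 1) c A) = UTy.shift e c A
  | .var n, c, j, _, _ => by grind [UTy.shift, UTy.subst]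
  | .arrow U T, _, _, h₁, h₂ => by
      simp [UTy.shift, UTy.subst, UTy.subst_shift_succ V e U h₁ h₂,
        Ty.subst_shift_succ V e T h₁ h₂]
  | .all U, _, _, h₁, h₂ => by
      simp [UTy.shift, UTy.subst, UTy.subst_shift_succ V e U (Nat.succ_le_succ h₁) (by omega)]

theorem Ty.subst_shift_succ (V : UTy) (e : ℕ) :
    ∀ (A : Ty) {c j : ℕ}, c ≤ j → j ≤ c + e →
    Ty.subst j V (Ty.shift (e + 1) c A) = Ty.shift e c A
  | .unit U, _, _, h₁, h₂ => by simp [Ty.shift, Ty.subst, UTy.subst_shift_succ V e U h₁ h₂]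
  | .add T R, _, _, h₁, h₂ => by
      simp [Ty.shift, Ty.subst, Ty.subst_shift_succ V e T h₁ h₂,
        Ty.subst_shift_succ V e R h₁ h₂]
  | .zero, _, _, _, _ => rfl
end

mutual
theorem UTy.subst_subst (V W : UTy) (k : ℕ) : ∀ (A : UTy) (j : ℕ),
    UTy.subst (k + j) V (UTy.subst j W A)
      = UTy.subst j (UTy.subst k V W) (UTy.subst (k + j + 1) V A)
  | .var n, j => by
      have h₁ := UTy.subst_shift V j k W 0
      have h₂ := UTy.subst_shift_succ (UTy.subst k V W) (k + j) V (Nat.zero_le j) (by omega)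
      grind [UTy.shift, UTy.subst]
  | .arrow U T, j => by
      simp [UTy.subst, UTy.subst_subst V W k U j, Ty.subst_subst V W k T j]
  | .all U, j => by
      simpa only [UTy.subst, UTy.all.injEq, Nat.add_assoc] using UTy.subst_subst V W k U (j + 1)

theorem Ty.subst_subst (V W : UTy) (k : ℕ) : ∀ (A : Ty) (j : ℕ),
    Ty.subst (k + j) V (Ty.subst j W A)
      = Ty.subst j (UTy.subst k V W) (Ty.subst (k + j + 1) V A)
  | .unit U, j => by simp [Ty.subst, UTy.subst_subst V W k U j]
  | .add T R, j => by simp [Ty.subst, Ty.subst_subst V W k T j, Ty.subst_subst V W k R j]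
  | .zero, _ => rfl
end

mutual
theorem UTy.subst_absAux {y X X' k : ℕ} (hXy : X < y)
    (hX' : UTy.subst k (.var y) (.var X) = .var X') : ∀ (A : UTy) (c : ℕ),
    ¬ UTy.Free (y + k + c + 1) A →
    UTy.subst (k + 1 + c) (.var y) (UTy.absAux X c A)
      = UTy.absAux X' c (UTy.subst (k + c) (.var y) A)
  | .var n, c, hfree => by
      simp only [UTy.Free] at hfree
      simp only [UTy.subst, UTy.shift] at hX'
      grind [UTy.absAux, UTy.subst, UTy.shift]
  | .arrow U T, c, hfree => by
      rw [UTy.Free, not_or] at hfree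
      simp [UTy.absAux, UTy.subst, UTy.subst_absAux hXy hX' U c hfree.1,
        Ty.subst_absAux hXy hX' T c hfree.2]
  | .all U, c, hfree => by
      simpa only [UTy.absAux, UTy.subst, UTy.all.injEq, Nat.add_assoc] using
        UTy.subst_absAux hXy hX' U (c + 1) hfree

theorem Ty.subst_absAux {y X X' k : ℕ} (hXy : X < y)
    (hX' : UTy.subst k (.var y) (.var X) = .var X') : ∀ (A : Ty) (c : ℕ),
    ¬ Ty.Free (y + k + c + 1) A →
    Ty.subst (k + 1 + c) (.var y) (Ty.absAux X c A)
      = Ty.absAux X' c (Ty.subst (k + c) (.var y) A)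
  | .unit U, c, hfree => by simp [Ty.absAux, Ty.subst, UTy.subst_absAux hXy hX' U c hfree]
  | .add T R, c, hfree => by
      rw [Ty.Free, not_or] at hfree
      simp [Ty.absAux, Ty.subst, Ty.subst_absAux hXy hX' T c hfree.1,
        Ty.subst_absAux hXy hX' R c hfree.2]
  | .zero, _, _ => rfl
end

mutual
theorem UTy.absAux_subst_var {y : ℕ} : ∀ (A : UTy) (c : ℕ), ¬ UTy.Free (y + c + 1) A →
    UTy.absAux y c (UTy.subst c (.var y) A) = A
  | .var n, c, hfree => by
      simp only [UTy.Free] at hfree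
      grind [UTy.absAux, UTy.subst, UTy.shift]
  | .arrow U T, c, hfree => by
      rw [UTy.Free, not_or] at hfree
      simp [UTy.subst, UTy.absAux, UTy.absAux_subst_var U c hfree.1,
        Ty.absAux_subst_var T c hfree.2]
  | .all U, c, hfree => by
      simp [UTy.subst, UTy.absAux, UTy.absAux_subst_var U (c + 1) hfree]

theorem Ty.absAux_subst_var {y : ℕ} : ∀ (A : Ty) (c : ℕ), ¬ Ty.Free (y + c + 1) A →
    Ty.absAux y c (Ty.subst c (.var y) A) = A
  | .unit U, c, hfree => by simp [Ty.subst, Ty.absAux, UTy.absAux_subst_var U c hfree]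
  | .add T R, c, hfree => by
      rw [Ty.Free, not_or] at hfree
      simp [Ty.subst, Ty.absAux, Ty.absAux_subst_var T c hfree.1,
        Ty.absAux_subst_var R c hfree.2]
  | .zero, _, _ => rfl
end

theorem UTy.subst_genAll {y X k : ℕ} {A : UTy} (hXy : X < y) (hfree : ¬ UTy.Free (y + k + 1) A) :
    ∃ X', UTy.subst k (.var y) (UTy.genAll X A) = UTy.genAll X' (UTy.subst k (.var y) A) := by
  obtain ⟨X', hX'⟩ : ∃ X', UTy.subst k (.var y) (.var X) = .var X' := by
    simp only [UTy.subst, UTy.shift]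
    split_ifs <;> exact ⟨_, rfl⟩
  exact ⟨X', congrArg UTy.all (UTy.subst_absAux hXy hX' A 0 hfree)⟩

mutual
theorem UTy.eventually_not_free : ∀ A : UTy, ∀ᶠ m in atTop, ¬ UTy.Free m A
  | .var n => (eventually_gt_atTop n).mono fun m hm h => by
      simp only [UTy.Free] at h
      omega
  | .arrow U T => (U.eventually_not_free.and T.eventually_not_free).mono fun _ hm h =>
      h.elim hm.1 hm.2
  | .all U => (tendsto_add_atTop_nat 1).eventually U.eventually_not_free

theorem Ty.eventually_not_free : ∀ A : Ty, ∀ᶠ m in atTop, ¬ Ty.Free m A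
  | .unit U => U.eventually_not_free
  | .add T R => (T.eventually_not_free.and R.eventually_not_free).mono fun _ hm h =>
      h.elim hm.1 hm.2
  | .zero => Eventually.of_forall fun _ h => h
end

mutual
theorem UEq.subst {U U' : UTy} (h : UEq U U') (k : ℕ) (V : UTy) :
    UEq (UTy.subst k V U) (UTy.subst k V U') :=
  match h with
  | .refl _ => .refl _
  | .symm h => (UEq.subst h k V).symm
  | .trans h h' => (UEq.subst h k V).trans (UEq.subst h' k V)
  | .arrow hU hT => .arrow (UEq.subst hU k V) (TEq.subst hT k V)
  | .all hU => .all (UEq.subst hU (k + 1) V)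

theorem TEq.subst {T T' : Ty} (h : TEq T T') (k : ℕ) (V : UTy) :
    TEq (Ty.subst k V T) (Ty.subst k V T') :=
  match h with
  | .refl _ => .refl _
  | .symm h => (TEq.subst h k V).symm
  | .trans h h' => (TEq.subst h k V).trans (TEq.subst h' k V)
  | .unit hU => .unit (UEq.subst hU k V)
  | .addCongr h h' => .addCongr (TEq.subst h k V) (TEq.subst h' k V)
  | .comm _ _ => .comm _ _
  | .assoc _ _ _ => .assoc _ _ _
  | .zero _ => .zero _
end

theorem UTy.subst_allN (V : UTy) : ∀ (m k : ℕ) (W : UTy),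
    UTy.subst k V (allN m W) = allN m (UTy.subst (k + m) V W)
  | 0, _, _ => rfl
  | m + 1, k, W => by
      simp only [allN, UTy.subst, UTy.subst_allN V m (k + 1) W, Nat.add_right_comm k 1 m]
      rfl

theorem Ty.subst_sumT (k : ℕ) (V : UTy) (L : List Ty) :
    Ty.subst k V (sumT L) = sumT (L.map (Ty.subst k V)) := by
  rw [sumT, sumT, List.foldl_map]
  exact (List.foldl_hom (Ty.subst k V) fun _ _ => rfl).symm

/-- `msubst` does not shift its arguments: the `i`-th type from the end of the list is read
under the `i` quantifiers still to be instantiated, so a substitution at depth `k` acts on it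
at depth `k + i`. -/
def substArgs (k : ℕ) (V : UTy) : List UTy → List UTy
  | [] => []
  | W :: Ws => UTy.subst (k + Ws.length) V W :: substArgs k V Ws

@[simp]
theorem length_substArgs (k : ℕ) (V : UTy) : ∀ Ws, (substArgs k V Ws).length = Ws.length
  | [] => rfl
  | _ :: Ws => congrArg (· + 1) (length_substArgs k V Ws)

theorem Ty.subst_msubst (V : UTy) : ∀ (Vs : List UTy) (A : Ty) (k : ℕ),
    Ty.subst k V (Ty.msubst Vs A) = Ty.msubst (substArgs k V Vs) (Ty.subst (k + Vs.length) V A)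
  | [], _, _ => rfl
  | W :: Ws, A, k => by
      have := Ty.subst_subst V W (k + Ws.length) A 0
      simp only [Nat.add_zero] at this
      exact (Ty.subst_msubst V Ws (Ty.subst 0 W A) k).trans (congrArg _ this)

theorem UTy.subst_msubst (V : UTy) : ∀ (Vs : List UTy) (A : UTy) (k : ℕ),
    UTy.subst k V (UTy.msubst Vs A)
      = UTy.msubst (substArgs k V Vs) (UTy.subst (k + Vs.length) V A)
  | [], _, _ => rfl
  | W :: Ws, A, k => by
      have := UTy.subst_subst V W (k + Ws.length) A 0
      simp only [Nat.add_zero] at this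
      exact (UTy.subst_msubst V Ws (UTy.subst 0 W A) k).trans (congrArg _ this)

theorem map_subst_succ_liftCtx (Γ : List UTy) (k : ℕ) (V : UTy) :
    (liftCtx Γ).map (UTy.subst (k + 1) V) = liftCtx (Γ.map (UTy.subst k V)) := by
  simp only [liftCtx, List.map_map]
  refine List.map_congr_left fun A _ => ?_
  simpa [Nat.add_comm] using UTy.subst_shift V 1 k A 0

theorem map_subst_zero_liftCtx (Γ : List UTy) (V : UTy) :
    (liftCtx Γ).map (UTy.subst 0 V) = Γ := by
  simp only [liftCtx, List.map_map]
  refine (List.map_congr_left fun A _ => ?_).trans (List.map_id Γ)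
  simpa [UTy.shift_zero] using UTy.subst_shift_succ V 0 A le_rfl le_rfl

theorem Typing.subst {Γ : List UTy} {s : Tm} {T : Ty} (h : Typing Γ s T) (k : ℕ) (V : UTy) :
    Typing (Γ.map (UTy.subst k V)) s (Ty.subst k V T) := by
  induction h generalizing k with
  | ax hget => exact .ax (by simp [hget])
  | axZero => exact .axZero
  | equiv _ he ih => exact (ih k).equiv (he.subst k V)
  | arrI _ ih => exact .arrI (ih k)
  | addI _ _ ih₁ ih₂ => exact .addI (ih₁ k) (ih₂ k)
  | @allE _ _ U W _ ih =>
      have := UTy.subst_subst V W k U 0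
      simp only [Nat.add_zero] at this
      simpa only [Ty.subst, this] using (ih k).allE (UTy.subst k V W)
  | allI _ ih =>
      exact .allI (by simpa only [map_subst_succ_liftCtx, Ty.subst] using ih (k + 1))
  | @arrE _ _ _ m U Ts Vs hTs hVs hlen _ _ ih₁ ih₂ =>
      have h := Typing.arrE (k := m) (U := UTy.subst (k + m) V U)
        (Ts := Ts.map (Ty.subst (k + m) V)) (Vs := Vs.map (substArgs k V))
        (by simpa using hTs) (by simpa using hVs) (by simpa using hlen)
        (by simpa [Ty.subst_sumT, Function.comp_def, Ty.subst, UTy.subst_allN, UTy.subst] using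
          ih₁ k)
        (by
          convert ih₂ k using 2
          rw [Ty.subst_sumT, List.map_map, List.map_map]
          refine congrArg sumT (List.map_congr_left fun Vj hVj => ?_)
          simp [Ty.subst, UTy.subst_msubst, hlen Vj hVj])
      convert h using 2
      rw [Ty.subst_sumT, List.map_flatten, List.map_map, List.map_map]
      refine congrArg (fun L => sumT L.flatten) (List.map_congr_left fun Ti _ => ?_)
      rw [Function.comp_apply, Function.comp_apply, List.map_map, List.map_map]
      refine List.map_congr_left fun Vj hVj => ?_
      simp [Ty.subst_msubst, hlen Vj hVj]

/-- `∀ᶠ y in atTop` reads "for every sufficiently fresh type variable `y`". -/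
theorem SSub.subst_var {U₁ U₂ : UTy} (h : SSub U₁ U₂) (k : ℕ) :
    ∀ᶠ y in atTop, SSub (UTy.subst k (.var y) U₁) (UTy.subst k (.var y) U₂) := by
  cases h with
  | gen X hgen =>
      have hfresh := (tendsto_add_atTop_nat (k + 1)).eventually U₁.eventually_not_free
      filter_upwards [eventually_gt_atTop X, hfresh] with y hXy hfree
      obtain ⟨X', hX'⟩ := UTy.subst_genAll hXy hfree
      exact .gen X' (hX' ▸ hgen.subst k (.var y))
  | inst U' V h₁ h₂ =>
      refine Eventually.of_forall fun y =>
        .inst _ (UTy.subst k (.var y) V) (h₁.subst k (.var y)) ?_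
      have := UTy.subst_subst (.var y) V k U' 0
      simp only [Nat.add_zero] at this
      exact this ▸ h₂.subst k (.var y)

theorem TPre.subst_var {T R : Ty} (h : TPre T R) (k : ℕ) :
    ∀ᶠ y in atTop, TPre (Ty.subst k (.var y) T) (Ty.subst k (.var y) R) := by
  induction h with
  | ofEq he => exact Eventually.of_forall fun _ => .ofEq (he.subst k _)
  | ofSSub hs => exact (hs.subst_var k).mono fun _ => .ofSSub
  | trans _ _ ih₁ ih₂ => exact (ih₁.and ih₂).mono fun _ h => h.1.trans h.2

theorem generation_lam_allI {Γ : List UTy} {t : Tm} {W : UTy} {R : Ty} {U : UTy}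
    (ht : Typing (W :: liftCtx Γ) t R) (hpre : TPre (.unit (.arrow W R)) (.unit U)) :
    ∃ (W' : UTy) (R' : Ty),
      Typing (W' :: Γ) t R' ∧ TPre (.unit (.arrow W' R')) (.unit (.all U)) := by
  obtain ⟨y, hpre_y, hfree⟩ := ((hpre.subst_var 0).and
    ((tendsto_add_atTop_nat 1).eventually U.eventually_not_free)).exists
  have hty := ht.subst 0 (.var y)
  rw [List.map_cons, map_subst_zero_liftCtx] at hty
  have hgen : UEq (.all U) (UTy.genAll y (UTy.subst 0 (.var y) U)) := by
    rw [UTy.genAll, UTy.absAux_subst_var U 0 hfree]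
    exact .refl _
  exact ⟨_, _, hty, hpre_y.trans (.ofSSub (.gen y hgen))⟩

/-- **Generation lemma for abstractions** (Lemma 7.2).  If `Γ ⊢ λx.t : T` then
`Γ, x:U ⊢ t : R` for some types `U`, `R` such that `U→R ≼ T`. -/
theorem generation_lam {Γ : List UTy} {t : Tm} {T : Ty}
    (h : Typing Γ (.lam t) T) :
    ∃ (U : UTy) (R : Ty), Typing (U :: Γ) t R ∧ TPre (.unit (.arrow U R)) T := by
  generalize hs : Tm.lam t = s at h
  induction h with
  | arrI ht =>
      cases hs
      exact ⟨_, _, ht, .ofEq (.refl _)⟩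
  | equiv _ he ih =>
      obtain ⟨U, R, ht, hpre⟩ := ih hs
      exact ⟨U, R, ht, hpre.trans (.ofEq he)⟩
  | allE V _ ih =>
      obtain ⟨U, R, ht, hpre⟩ := ih hs
      exact ⟨U, R, ht, hpre.trans (.ofSSub (.inst _ V (.refl _) (.refl _)))⟩
  | allI _ ih =>
      obtain ⟨U, R, ht, hpre⟩ := ih hs
      exact generation_lam_allI ht hpre
  | ax _ | axZero | arrE _ _ _ _ _ _ _ | addI _ _ _ _ => nomatch hs
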